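/- arXiv:2110.12071 — 2 statements merged into one kernel-verified Lean document; each statement's English description precedes it below -/
import Mathlib

section
/- For any real β and nonnegative integer d, the tail sum of modified Bessel functions satisfies ∑_{j=d+1}^∞ I_j(β) = ∑_{j=d+1}^∞ (β/2)^j/j! · ∑_{k=0}^{⌊(j-d-1)/2⌋} C(j,k), where C(j,k) is the binomial coefficient. -/
/-!
Expand each `I_{d+1+m}(β)` by its defining series: the tail sum becomes the double series
`∑_{m,k} C(2k+d+1+m, k) (β/2)^{2k+d+1+m} / (2k+d+1+m)!`. Substituting `n = m + 2k` turns it into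
a sum over the pairs `(n, k)` with `2k ≤ n`, and for fixed `n` the inner sum is the finite sum over
`k ≤ n/2`. The double series converges absolutely because `∑_k C(j, k) ≤ 2^j`, so that the
`j`-th row is dominated by `|β|^j / j!`, which justifies the rearrangement.
-/

/-- The modified Bessel function of the first kind, of integer order `j ≥ 0`:
`I_j(β) = ∑_{m=0}^∞ C(2m+j, m) (β/2)^{2m+j}/(2m+j)!`. -/
noncomputable def besselI (j : ℕ) (β : ℝ) : ℝ :=
  ∑' m : ℕ, (Nat.choose (2 * m + j) m : ℝ) * (β / 2) ^ (2 * m + j) / Nat.factorial (2 * m + j)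

open Finset

section Reindex

variable {E : Type*} [NormedAddCommGroup E] [CompleteSpace E]

lemma tsum_ite_two_mul_le {M : Type*} [AddCommMonoid M] [TopologicalSpace M] (n : ℕ) (h : ℕ → M) :
    ∑' k, (if 2 * k ≤ n then h k else 0) = ∑ k ∈ range (n / 2 + 1), h k := by
  rw [tsum_eq_sum (s := range (n / 2 + 1)) fun k hk => if_neg (by simp at hk; omega)]
  exact sum_congr rfl fun k hk => if_pos (by simp at hk; omega)

lemma injective_add_two_mul_prod : Function.Injective fun p : ℕ × ℕ => (p.1 + 2 * p.2, p.2) := by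
  rintro ⟨m, k⟩ ⟨m', k'⟩ h
  simp only [Prod.mk.injEq] at h ⊢
  omega

theorem tsum_tsum_add_two_mul {f : ℕ → ℕ → E}
    (hf : Summable fun n => ∑ k ∈ range (n / 2 + 1), ‖f n k‖) :
    ∑' m, ∑' k, f (m + 2 * k) k = ∑' n, ∑ k ∈ range (n / 2 + 1), f n k := by
  set g : ℕ × ℕ → E := fun p => if 2 * p.2 ≤ p.1 then f p.1 p.2 else 0
  have hsupp : Function.support g ⊆ Set.range fun p : ℕ × ℕ => (p.1 + 2 * p.2, p.2) := by
    rintro ⟨n, k⟩ hnk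
    have h2k : 2 * k ≤ n := by
      by_contra h
      exact hnk (if_neg h)
    exact ⟨(n - 2 * k, k), Prod.ext (Nat.sub_add_cancel h2k) rfl⟩
  have hg : Summable g := by
    refine .of_norm <| (summable_prod_of_nonneg fun _ => norm_nonneg _).2
      ⟨fun n => summable_of_ne_finset_zero (s := range (n / 2 + 1)) fun k hk => ?_, ?_⟩
    · simp only [g, apply_ite norm, norm_zero]
      exact if_neg (by simp at hk; omega)
    · simpa only [g, apply_ite norm, norm_zero, tsum_ite_two_mul_le] using hf
  have hge : ∀ m k, g (m + 2 * k, k) = f (m + 2 * k) k := fun m k => if_pos (by omega)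
  have hgf : Summable fun p : ℕ × ℕ => f (p.1 + 2 * p.2) p.2 := by
    simpa only [Function.comp_def, hge] using hg.comp_injective injective_add_two_mul_prod
  calc ∑' m, ∑' k, f (m + 2 * k) k
      = ∑' p : ℕ × ℕ, g (p.1 + 2 * p.2, p.2) := by
        simp only [hge]
        exact (hgf.tsum_prod' hgf.prod_factor).symm
    _ = ∑' p, g p := injective_add_two_mul_prod.tsum_eq hsupp
    _ = ∑' n, ∑' k, g (n, k) := hg.tsum_prod' hg.prod_factor
    _ = ∑' n, ∑ k ∈ range (n / 2 + 1), f n k := by simp only [g, tsum_ite_two_mul_le]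

end Reindex

lemma sum_range_choose_le_two_pow {n m : ℕ} (hm : m ≤ n + 1) :
    ∑ k ∈ range m, n.choose k ≤ 2 ^ n :=
  (Nat.sum_range_choose n).le.trans' <|
    sum_le_sum_of_subset_of_nonneg (range_subset_range.2 hm) fun _ _ _ => Nat.zero_le _

lemma sum_range_norm_choose_mul_pow_div_factorial_le (x : ℝ) {j m : ℕ} (hm : m ≤ j + 1) :
    ∑ k ∈ range m, ‖(j.choose k : ℝ) * x ^ j / j.factorial‖ ≤ |2 * x| ^ j / j.factorial := by
  simp only [norm_div, norm_mul, norm_pow, Real.norm_eq_abs, Nat.abs_cast, ← sum_div,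
    ← sum_mul, abs_mul, abs_two, mul_pow]
  gcongr
  exact_mod_cast sum_range_choose_le_two_pow hm

/-- Tail sum identity for modified Bessel functions:
`∑_{j=d+1}^∞ I_j(β) = ∑_{j=d+1}^∞ (β/2)^j/j! · ∑_{k=0}^{⌊(j-d-1)/2⌋} C(j,k)`. -/
theorem bessel_tail_sum (β : ℝ) (d : ℕ) :
    (∑' m : ℕ, besselI (d + 1 + m) β)
      = ∑' m : ℕ, (β / 2) ^ (d + 1 + m) / Nat.factorial (d + 1 + m) *
          ∑ k ∈ Finset.range (m / 2 + 1), (Nat.choose (d + 1 + m) k : ℝ) := by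
  set f : ℕ → ℕ → ℝ := fun n k =>
    (Nat.choose (d + 1 + n) k : ℝ) * (β / 2) ^ (d + 1 + n) / Nat.factorial (d + 1 + n)
  have hbessel : ∀ m, besselI (d + 1 + m) β = ∑' k, f (m + 2 * k) k := fun m =>
    tsum_congr fun k => by rw [show 2 * k + (d + 1 + m) = d + 1 + (m + 2 * k) by ring]
  have hf : Summable fun n => ∑ k ∈ range (n / 2 + 1), ‖f n k‖ := by
    have hexp : Summable fun n => |β| ^ (d + 1 + n) / (d + 1 + n).factorial := by
      simpa only [add_comm (d + 1)] using
        (summable_nat_add_iff (d + 1)).2 (Real.summable_pow_div_factorial |β|)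
    refine hexp.of_nonneg_of_le (fun _ => sum_nonneg fun _ _ => norm_nonneg _) fun n => ?_
    simpa only [mul_div_cancel₀ β two_ne_zero] using
      sum_range_norm_choose_mul_pow_div_factorial_le (β / 2) (by omega : n / 2 + 1 ≤ d + 1 + n + 1)
  simp only [hbessel, tsum_tsum_add_two_mul hf, f, mul_sum]
  exact tsum_congr fun n => sum_congr rfl fun k _ => by ring
end

section
/- Let Ĥ be a Hermitian operator with ‖Ĥ‖ ≤ 1 and x ∈ ℝ. Then for every even nonnegative integer n, the operator A_n = (iĤ)^n (I + i·(x/(n+1))·Ĥ)/√(1+(x/(n+1))²) has operator norm at most 1, and e^{iĤx} = ∑_{n even} α_n A_n with α_n = (x^n/n!)·√(1+(x/(n+1))²), where the sum over even n ≥ 0 converges absolutely. -/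
/-!
In the exponential series of `iĤx` the terms of orders `n` and `n + 1` combine to
`(xⁿ / n!) (iĤ)ⁿ (1 + i (x / (n + 1)) Ĥ)`. For self-adjoint `Ĥ` the C*-identity gives
`‖1 + itĤ‖² = ‖1 + t²Ĥ²‖ ≤ 1 + t²`, so after dividing by `√(1 + t²)` every such operator is a
contraction, and the coefficients are dominated by `√(1 + x²)` times the terms of the series
of `cosh x`.
-/

open Complex
open scoped Nat

theorem HasSum.even_add_odd_pairs {α : Type*} [AddCommMonoid α] [TopologicalSpace α]
    [ContinuousAdd α] [RegularSpace α] {f : ℕ → α} {a : α} (h : HasSum f a) :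
    HasSum (fun m => f (2 * m) + f (2 * m + 1)) a := by
  refine ((Nat.divModEquiv 2).symm.hasSum_iff.mpr h).prod_fiberwise fun m => ?_
  simpa [Fin.sum_univ_two, mul_comm] using hasSum_fintype (fun i : Fin 2 => f (m * 2 + i))

theorem inv_factorial_smul_pow_add_succ {𝕜 A : Type*} [Field 𝕜] [CharZero 𝕜] [Ring A]
    [Algebra 𝕜 A] (c : 𝕜) (b : A) (n : ℕ) :
    (n !⁻¹ : 𝕜) • (c • b) ^ n + ((n + 1)!⁻¹ : 𝕜) • (c • b) ^ (n + 1) =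
      (c ^ n / n !) • (b ^ n * (1 + (c / (n + 1)) • b)) := by
  rw [smul_pow, smul_pow, mul_add, mul_one, mul_smul_comm, ← pow_succ, smul_add, smul_smul,
    smul_smul, smul_smul]
  congr 2
  · ring
  · rw [Nat.factorial_succ]
    push_cast
    field_simp
    ring

theorem norm_pow_mul_le_of_norm_le_one {R : Type*} [SeminormedRing R] {a : R} (ha : ‖a‖ ≤ 1)
    (b : R) (n : ℕ) : ‖a ^ n * b‖ ≤ ‖b‖ := by
  induction n with
  | zero => simp
  | succ n ih =>
    rw [pow_succ', mul_assoc]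
    exact (norm_mul_le _ _).trans ((mul_le_mul ha ih (norm_nonneg _) zero_le_one).trans_eq
      (one_mul _))

theorem CStarRing.norm_one_le {E : Type*} [NormedRing E] [StarRing E] [CStarRing E] :
    ‖(1 : E)‖ ≤ 1 := by
  rcases subsingleton_or_nontrivial E with _ | _
  · simp [Subsingleton.elim (1 : E) 0]
  · exact CStarRing.norm_one.le

theorem IsSelfAdjoint.star_mul_self_one_add_I_mul_smul {A : Type*} [Ring A] [StarRing A]
    [Algebra ℂ A] [StarModule ℂ A] {H : A} (hH : IsSelfAdjoint H) (t : ℝ) :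
    star (1 + (I * t) • H) * (1 + (I * t) • H) = 1 + ((t : ℂ) ^ 2) • (H * H) := by
  have hconj : star (I * t) = -(I * t) := by simp
  rw [star_add, star_one, star_smul, hconj, hH.star_eq, neg_smul]
  simp only [add_mul, mul_add, one_mul, mul_one, smul_mul_smul_comm, neg_mul]
  rw [show I * t * (I * t) = -((t : ℂ) ^ 2) by ring_nf; simp]
  simp only [neg_smul, neg_neg]
  abel

section CStarRing

variable {A : Type*} [NormedRing A] [StarRing A] [CStarRing A] [NormedAlgebra ℂ A]
  [StarModule ℂ A]

theorem IsSelfAdjoint.norm_one_add_I_mul_smul_le {H : A} (hH : IsSelfAdjoint H) (t : ℝ) :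
    ‖1 + (I * t) • H‖ ≤ √(1 + t ^ 2 * ‖H‖ ^ 2) := by
  refine Real.le_sqrt_of_sq_le ?_
  calc ‖1 + (I * t) • H‖ ^ 2 = ‖1 + ((t : ℂ) ^ 2) • (H * H)‖ := by
        rw [sq, ← CStarRing.norm_star_mul_self, hH.star_mul_self_one_add_I_mul_smul]
    _ ≤ ‖(1 : A)‖ + ‖((t : ℂ) ^ 2) • (H * H)‖ := norm_add_le _ _
    _ ≤ 1 + t ^ 2 * ‖H‖ ^ 2 := by
        rw [norm_smul, hH.norm_mul_self, ← ofReal_pow, norm_real,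
          Real.norm_of_nonneg (sq_nonneg t)]
        gcongr
        exact CStarRing.norm_one_le

theorem IsSelfAdjoint.norm_inv_sqrt_smul_pow_mul_le_one {H : A} (hH : IsSelfAdjoint H)
    (hH1 : ‖H‖ ≤ 1) (n : ℕ) (t : ℝ) :
    ‖(((√(1 + t ^ 2))⁻¹ : ℝ) : ℂ) • ((I • H) ^ n * (1 + (I * t) • H))‖ ≤ 1 := by
  have hpos : 0 < √(1 + t ^ 2) := by positivity
  have hIH : ‖I • H‖ ≤ 1 := by rwa [norm_smul, norm_I, one_mul]
  have hC : ‖1 + (I * t) • H‖ ≤ √(1 + t ^ 2) :=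
    (hH.norm_one_add_I_mul_smul_le t).trans (Real.sqrt_le_sqrt (add_le_add_right
      (mul_le_of_le_one_right (sq_nonneg t) (pow_le_one₀ (norm_nonneg H) hH1)) 1))
  rw [norm_smul, norm_real, Real.norm_of_nonneg (inv_nonneg.mpr hpos.le), inv_mul_le_iff₀ hpos,
    mul_one]
  exact (norm_pow_mul_le_of_norm_le_one hIH _ n).trans hC

end CStarRing

theorem lcu_term_eq_exp_series_pair {A : Type*} [Ring A] [Algebra ℂ A] (H : A) (x : ℝ) (m : ℕ) :
    ((x ^ (2 * m) / (2 * m)! * √(1 + (x / (2 * m + 1)) ^ 2) : ℝ) : ℂ) •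
        ((((√(1 + (x / (2 * m + 1)) ^ 2))⁻¹ : ℝ) : ℂ) •
          ((I • H) ^ (2 * m) * (1 + (I * ((x / (2 * m + 1) : ℝ) : ℂ)) • H))) =
      ((2 * m)!⁻¹ : ℂ) • ((I * x) • H) ^ (2 * m) +
        ((2 * m + 1)!⁻¹ : ℂ) • ((I * x) • H) ^ (2 * m + 1) := by
  have hs : √(1 + (x / (2 * m + 1)) ^ 2) ≠ 0 := by positivity
  rw [smul_smul, ← ofReal_mul, mul_inv_cancel_right₀ hs,
    show (I * x) • H = (x : ℂ) • (I • H) by rw [mul_comm, mul_smul],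
    inv_factorial_smul_pow_add_succ, mul_smul I]
  push_cast
  rw [smul_comm I]

theorem summable_pow_two_mul_div_factorial_mul_sqrt (x : ℝ) :
    Summable fun m : ℕ => x ^ (2 * m) / (2 * m)! * √(1 + (x / (2 * m + 1)) ^ 2) := by
  have hcoeff (m : ℕ) : 0 ≤ x ^ (2 * m) / (2 * m)! := by
    have := (even_two_mul m).pow_nonneg x
    positivity
  refine .of_nonneg_of_le (fun m => mul_nonneg (hcoeff m) (Real.sqrt_nonneg _))
    (fun m => mul_le_mul_of_nonneg_left ?_ (hcoeff m)) ((Real.hasSum_cosh x).summable.mul_right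
      √(1 + x ^ 2))
  refine Real.sqrt_le_sqrt (add_le_add_right ?_ 1)
  rw [div_pow]
  exact div_le_self (sq_nonneg x) (one_le_pow₀ (by linarith [(m.cast_nonneg : (0 : ℝ) ≤ m)]))

/-- For a Hermitian operator `Ĥ` with `‖Ĥ‖ ≤ 1` and `x ∈ ℝ`, each even-order operator
`A_n = (iĤ)^n (I + i(x/(n+1))Ĥ)/√(1+(x/(n+1))²)` has norm at most `1`, and
`e^{iĤx} = ∑_{n even} α_n A_n` with `α_n = (xⁿ/n!)√(1+(x/(n+1))²)`, the series over
even `n` converging absolutely. -/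
theorem exp_even_lcu_expansion
    {A : Type*} [NormedRing A] [StarRing A] [CStarRing A] [NormedAlgebra ℂ A]
    [CompleteSpace A] [StarModule ℂ A]
    (H : A) (hH : star H = H) (hHnorm : ‖H‖ ≤ 1) (x : ℝ) :
    (∀ m : ℕ,
      ‖(((Real.sqrt (1 + (x / (2 * m + 1)) ^ 2))⁻¹ : ℝ) : ℂ) •
          ((Complex.I • H) ^ (2 * m) *
            ((1 : A) + (Complex.I * ((x / (2 * m + 1) : ℝ) : ℂ)) • H))‖ ≤ 1) ∧
    Summable (fun m : ℕ =>
      x ^ (2 * m) / Nat.factorial (2 * m) * Real.sqrt (1 + (x / (2 * m + 1)) ^ 2)) ∧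
    HasSum (fun m : ℕ =>
        ((x ^ (2 * m) / Nat.factorial (2 * m) *
            Real.sqrt (1 + (x / (2 * m + 1)) ^ 2) : ℝ) : ℂ) •
          ((((Real.sqrt (1 + (x / (2 * m + 1)) ^ 2))⁻¹ : ℝ) : ℂ) •
            ((Complex.I • H) ^ (2 * m) *
              ((1 : A) + (Complex.I * ((x / (2 * m + 1) : ℝ) : ℂ)) • H))))
      (NormedSpace.exp ((Complex.I * x) • H)) := by
  refine ⟨fun m => IsSelfAdjoint.norm_inv_sqrt_smul_pow_mul_le_one hH hHnorm (2 * m) _,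
    summable_pow_two_mul_div_factorial_mul_sqrt x, ?_⟩
  simpa only [lcu_term_eq_exp_series_pair] using
    (NormedSpace.exp_series_hasSum_exp' (𝕂 := ℂ) ((I * x) • H)).even_add_odd_pairs
end
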